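/- Let A be a real n × n matrix and let C ≥ 0 be a real number. If ‖A·v‖_◦ ≤ C·‖v‖_◦ for every vector v ∈ {0,1}^n, then ‖A·u‖_◦ ≤ 16·C·‖u‖_◦ for every vector u ∈ ℝ^n. -/

import Mathlib

open MeasureTheory

/-- The `‖·‖_◦` norm: `‖v‖_◦ = ∫₀^∞ √(#{i : |v_i| ≥ x}) dx`. -/
noncomputable def circNorm {n : ℕ} (v : Fin n → ℝ) : ℝ :=
  ∫ x in Set.Ioi (0 : ℝ),
    Real.sqrt ((Finset.univ.filter (fun i : Fin n => x ≤ |v i|)).card : ℝ)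

/-!
Sorting `|v|` decreasingly, the layer-cake integral becomes
`‖v‖_◦ = ∑ₖ (√(k+1) - √k) |v|*ₖ`. The weights decrease, so by the rearrangement inequality
`‖v‖_◦` is the largest of the sums `∑ₖ (√(k+1) - √k) |v (τ k)|` over permutations `τ`; hence it
is monotone in `|v|` and satisfies the triangle inequality. For nonnegative vectors sorted by the
same permutation the formula is additive, so removing the smallest positive level `c` of `u ≥ 0`
writes `u = w + c • 1_{u > 0}` with `‖u‖_◦ = ‖w‖_◦ + c ‖1_{u > 0}‖_◦` and `w` of smaller
support. Induction on the support gives `‖A u‖_◦ ≤ C ‖u‖_◦` for `u ≥ 0`, and splitting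
`u = u⁺ - u⁻` gives the constant `2 C ≤ 16 C`.
-/

open Finset

noncomputable def circWeight (k : ℕ) : ℝ := √(k + 1) - √k

lemma circWeight_nonneg (k : ℕ) : 0 ≤ circWeight k :=
  sub_nonneg.2 (Real.sqrt_le_sqrt (by linarith))

lemma circWeight_eq_inv (k : ℕ) : circWeight k = (√(k + 1) + √k)⁻¹ := by
  refine eq_inv_of_mul_eq_one_left ?_
  rw [circWeight]
  linear_combination (Real.sq_sqrt (by positivity : (0 : ℝ) ≤ k + 1)) -
    Real.sq_sqrt (Nat.cast_nonneg (α := ℝ) k)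

lemma circWeight_antitone : Antitone circWeight := by
  intro k l hkl
  rw [circWeight_eq_inv, circWeight_eq_inv]
  have hkl' : (k : ℝ) ≤ l := Nat.cast_le.2 hkl
  gcongr

lemma sum_range_circWeight (m : ℕ) : ∑ k ∈ range m, circWeight k = √m := by
  simpa [circWeight] using sum_range_sub (fun k : ℕ => √(k : ℝ)) m

section
variable {n : ℕ}

lemma lt_card_filter_le_iff {g : Fin n → ℝ} (hg : Antitone g) (x : ℝ) (k : Fin n) :
    (k : ℕ) < #{j | x ≤ g j} ↔ x ≤ g k := by
  constructor
  · intro hk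
    by_contra! hgk
    have hsub : ({j | x ≤ g j} : Finset (Fin n)) ⊆ Iio k := fun j hj => by
      simp only [mem_filter, mem_univ, true_and] at hj
      exact mem_Iio.2 (lt_of_not_ge fun hkj => (hg hkj).not_gt (hgk.trans_le hj))
    simpa using (card_le_card hsub).trans_lt' hk
  · intro hx
    have hsub : Iic k ⊆ ({j | x ≤ g j} : Finset (Fin n)) := fun j hj =>
      mem_filter.2 ⟨mem_univ j, hx.trans (hg (mem_Iic.1 hj))⟩
    simpa using card_le_card hsub

lemma sqrt_card_filter_le_eq_sum {g : Fin n → ℝ} (hg : Antitone g) (x : ℝ) :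
    √(#{i | x ≤ g i} : ℝ) = ∑ k : Fin n, circWeight k * (Set.Iic (g k)).indicator 1 x := by
  set m := #{i | x ≤ g i}
  have hm : m ≤ n := (card_filter_le _ _).trans_eq (card_fin n)
  have hrange : (range n).filter (· < m) = range m := by
    ext k; simp only [mem_filter, mem_range]; omega
  calc √(m : ℝ) = ∑ k ∈ (range n).filter (· < m), circWeight k := by
        rw [hrange, sum_range_circWeight]
    _ = ∑ k : Fin n, if (k : ℕ) < m then circWeight k else 0 := by
        rw [sum_filter, Fin.sum_univ_eq_sum_range (fun k => if k < m then circWeight k else 0)]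
    _ = _ := by
        simp only [lt_card_filter_le_iff hg x, Set.indicator, Set.mem_Iic, Pi.one_apply, mul_ite,
          mul_one, mul_zero, m]

lemma volume_restrict_Ioi_zero_Iic {c : ℝ} :
    volume.restrict (Set.Ioi 0) (Set.Iic c) = ENNReal.ofReal c := by
  rw [Measure.restrict_apply measurableSet_Iic, Set.Iic_inter_Ioi, Real.volume_Ioc, sub_zero]

lemma integrableOn_Ioi_zero_indicator_Iic (c : ℝ) :
    IntegrableOn ((Set.Iic c).indicator (1 : ℝ → ℝ)) (Set.Ioi 0) := by
  rw [IntegrableOn, integrable_indicator_iff measurableSet_Iic]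
  exact integrableOn_const (by rw [volume_restrict_Ioi_zero_Iic]; exact ENNReal.ofReal_ne_top)

lemma setIntegral_Ioi_zero_indicator_Iic {c : ℝ} (hc : 0 ≤ c) :
    ∫ x in Set.Ioi (0 : ℝ), (Set.Iic c).indicator 1 x = c := by
  rw [integral_indicator_one measurableSet_Iic, measureReal_def, volume_restrict_Ioi_zero_Iic,
    ENNReal.toReal_ofReal hc]

lemma circNorm_eq_sum_of_antitone {v : Fin n → ℝ} (hv : Antitone fun k => |v k|) :
    circNorm v = ∑ k : Fin n, circWeight k * |v k| := by
  calc circNorm v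
      = ∫ x in Set.Ioi (0 : ℝ), ∑ k : Fin n, circWeight k * (Set.Iic |v k|).indicator 1 x :=
        integral_congr_ae (ae_of_all _ fun x => sqrt_card_filter_le_eq_sum hv x)
    _ = ∑ k : Fin n, circWeight k * |v k| := by
        rw [integral_finsetSum _ fun k _ => (integrableOn_Ioi_zero_indicator_Iic _).const_mul _]
        simp only [integral_const_mul, setIntegral_Ioi_zero_indicator_Iic (abs_nonneg _)]

lemma circNorm_comp_perm (v : Fin n → ℝ) (σ : Equiv.Perm (Fin n)) :
    circNorm (v ∘ σ) = circNorm v := by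
  simp only [circNorm, card_filter, Function.comp_apply]
  congr! 4 with x
  exact Equiv.sum_comp σ (fun i => if x ≤ |v i| then 1 else 0)

lemma exists_perm_antitone_comp (f : Fin n → ℝ) :
    ∃ σ : Equiv.Perm (Fin n), Antitone (f ∘ σ) :=
  ⟨Tuple.sort _, monotone_toDual_comp_iff.1 (Tuple.monotone_sort (OrderDual.toDual ∘ f))⟩

lemma sum_circWeight_mul_abs_comp_perm_le (v : Fin n → ℝ) (τ : Equiv.Perm (Fin n)) :
    ∑ k : Fin n, circWeight k * |v (τ k)| ≤ circNorm v := by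
  obtain ⟨σ, hσ⟩ := exists_perm_antitone_comp (|v ·|)
  have hmono : Monovary (fun k : Fin n => circWeight k) fun k => |v (σ k)| :=
    (circWeight_antitone.comp_monotone Fin.val_strictMono.monotone).monovary hσ
  rw [← circNorm_comp_perm v σ, circNorm_eq_sum_of_antitone (v := v ∘ σ) hσ]
  simpa using hmono.sum_mul_comp_perm_le_sum_mul (σ := σ.symm * τ)

lemma circNorm_nonneg (v : Fin n → ℝ) : 0 ≤ circNorm v :=
  setIntegral_nonneg measurableSet_Ioi fun _ _ => Real.sqrt_nonneg _

lemma circNorm_mono {v w : Fin n → ℝ} (h : ∀ i, |v i| ≤ |w i|) : circNorm v ≤ circNorm w := by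
  obtain ⟨σ, hσ⟩ := exists_perm_antitone_comp (|v ·|)
  rw [← circNorm_comp_perm v σ, circNorm_eq_sum_of_antitone (v := v ∘ σ) hσ]
  refine le_trans (sum_le_sum fun k _ => ?_) (sum_circWeight_mul_abs_comp_perm_le w σ)
  exact mul_le_mul_of_nonneg_left (h _) (circWeight_nonneg _)

lemma circNorm_le_add_of_abs_le {u v w : Fin n → ℝ} (h : ∀ i, |u i| ≤ |v i| + |w i|) :
    circNorm u ≤ circNorm v + circNorm w := by
  obtain ⟨σ, hσ⟩ := exists_perm_antitone_comp (|u ·|)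
  rw [← circNorm_comp_perm u σ, circNorm_eq_sum_of_antitone (v := u ∘ σ) hσ]
  calc ∑ k : Fin n, circWeight k * |u (σ k)|
      ≤ ∑ k : Fin n, (circWeight k * |v (σ k)| + circWeight k * |w (σ k)|) :=
        sum_le_sum fun k _ => by
          rw [← mul_add]; exact mul_le_mul_of_nonneg_left (h _) (circWeight_nonneg _)
    _ ≤ circNorm v + circNorm w := by
        rw [sum_add_distrib]
        exact add_le_add (sum_circWeight_mul_abs_comp_perm_le v σ)
          (sum_circWeight_mul_abs_comp_perm_le w σ)

lemma circNorm_add_le (v w : Fin n → ℝ) : circNorm (v + w) ≤ circNorm v + circNorm w :=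
  circNorm_le_add_of_abs_le fun i => abs_add_le (v i) (w i)

lemma circNorm_sub_le (v w : Fin n → ℝ) : circNorm (v - w) ≤ circNorm v + circNorm w :=
  circNorm_le_add_of_abs_le fun i => abs_sub (v i) (w i)

lemma circNorm_smul {c : ℝ} (hc : 0 ≤ c) (v : Fin n → ℝ) : circNorm (c • v) = c * circNorm v := by
  obtain ⟨σ, hσ⟩ := exists_perm_antitone_comp (|v ·|)
  have hcσ : Antitone fun k => |((c • v) ∘ σ) k| := by
    simpa [abs_mul, abs_of_nonneg hc] using hσ.const_mul hc
  rw [← circNorm_comp_perm v σ, ← circNorm_comp_perm (c • v) σ, circNorm_eq_sum_of_antitone hcσ,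
    circNorm_eq_sum_of_antitone (v := v ∘ σ) hσ, mul_sum]
  simp [abs_mul, abs_of_nonneg hc, mul_left_comm]

lemma circNorm_add_of_antitone_comp {v w : Fin n → ℝ} (hv : 0 ≤ v) (hw : 0 ≤ w)
    {σ : Equiv.Perm (Fin n)} (hvσ : Antitone (v ∘ σ)) (hwσ : Antitone (w ∘ σ)) :
    circNorm (v + w) = circNorm v + circNorm w := by
  have hsum : ∀ u : Fin n → ℝ, 0 ≤ u → Antitone (u ∘ σ) →
      circNorm u = ∑ k : Fin n, circWeight k * u (σ k) := fun u hu huσ => by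
    have habs : ∀ k, |u (σ k)| = u (σ k) := fun k => abs_of_nonneg (hu _)
    rw [← circNorm_comp_perm u σ, circNorm_eq_sum_of_antitone (v := u ∘ σ)
      (by simp only [Function.comp_apply, habs]; exact huσ)]
    simp only [Function.comp_apply, habs]
  rw [hsum v hv hvσ, hsum w hw hwσ, hsum (v + w) (add_nonneg hv hw) (hvσ.add hwσ),
    ← sum_add_distrib]
  simp [mul_add]

lemma eq_max_sub_add_smul_of_le {u : Fin n → ℝ} (hu : 0 ≤ u) {c : ℝ} (hc : 0 ≤ c)
    (hcu : ∀ i, 0 < u i → c ≤ u i) :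
    u = (fun i => max (u i - c) 0) + c • fun i => if 0 < u i then 1 else 0 := by
  ext i
  by_cases hi : 0 < u i
  · simp [hi, max_eq_left (sub_nonneg.2 (hcu i hi))]
  · simp [le_antisymm (not_lt.1 hi) (hu i), hc]

lemma circNorm_eq_max_sub_add_smul_of_le {u : Fin n → ℝ} (hu : 0 ≤ u) {c : ℝ} (hc : 0 ≤ c)
    (hcu : ∀ i, 0 < u i → c ≤ u i) :
    circNorm u = circNorm (fun i => max (u i - c) 0) +
      c * circNorm (fun i => if 0 < u i then 1 else 0) := by
  obtain ⟨σ, hσ⟩ := exists_perm_antitone_comp u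
  have hwσ : Antitone ((fun i => max (u i - c) 0) ∘ σ) :=
    Monotone.comp_antitone (g := fun t => max (t - c) 0)
      (fun _ _ hst => max_le_max_right 0 (sub_le_sub_right hst c)) hσ
  have hbσ : Antitone ((c • fun i => if 0 < u i then (1 : ℝ) else 0) ∘ σ) :=
    Monotone.comp_antitone (g := fun t => c * if 0 < t then 1 else 0)
      (fun _ _ hst => mul_le_mul_of_nonneg_left (by split_ifs <;> norm_num; linarith) hc) hσ
  have hb : 0 ≤ c • fun i => if 0 < u i then (1 : ℝ) else 0 :=
    smul_nonneg hc fun i => by dsimp only; split_ifs <;> norm_num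
  conv_lhs => rw [eq_max_sub_add_smul_of_le hu hc hcu]
  rw [circNorm_add_of_antitone_comp (v := fun i => max (u i - c) 0) (fun _ => le_max_right _ _) hb
    hwσ hbσ, circNorm_smul hc]

end

open Matrix

lemma circNorm_mulVec_le_of_nonneg {m n : ℕ} (A : Matrix (Fin m) (Fin n) ℝ) {C : ℝ}
    (h : ∀ v : Fin n → ℝ, (∀ i, v i = 0 ∨ v i = 1) → circNorm (A *ᵥ v) ≤ C * circNorm v)
    {u : Fin n → ℝ} (hu : 0 ≤ u) : circNorm (A *ᵥ u) ≤ C * circNorm u := by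
  induction hcard : #{i | 0 < u i} using Nat.strong_induction_on generalizing u with
  | _ k ih =>
  rcases (univ.filter fun i => 0 < u i).eq_empty_or_nonempty with hempty | hne
  · refine h u fun i => Or.inl (le_antisymm (not_lt.1 fun hi => ?_) (hu i))
    exact (filter_eq_empty_iff.1 hempty) (mem_univ i) hi
  obtain ⟨i₀, hi₀, hmin⟩ := exists_min_image _ u hne
  replace hi₀ : 0 < u i₀ := (mem_filter.1 hi₀).2
  replace hmin : ∀ i, 0 < u i → u i₀ ≤ u i := fun i hi => hmin i (mem_filter.2 ⟨mem_univ i, hi⟩)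
  set c := u i₀
  set w : Fin n → ℝ := fun i => max (u i - c) 0
  set b : Fin n → ℝ := fun i => if 0 < u i then 1 else 0
  have hsupp : #{i | 0 < w i} < k := by
    have hsub : ({i | 0 < w i} : Finset (Fin n)) ⊆ ({i | 0 < u i} : Finset (Fin n)) :=
      monotone_filter_right _ fun i _ hi =>
        hi₀.trans (sub_pos.1 ((lt_max_iff.1 hi).resolve_right (lt_irrefl 0)))
    rw [← hcard]
    refine card_lt_card ((ssubset_iff_of_subset hsub).2 ⟨i₀, mem_filter.2 ⟨mem_univ _, hi₀⟩, ?_⟩)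
    simp [w, c]
  calc circNorm (A *ᵥ u) ≤ circNorm (A *ᵥ w) + c * circNorm (A *ᵥ b) := by
        rw [eq_max_sub_add_smul_of_le hu hi₀.le hmin, mulVec_add, mulVec_smul,
          ← circNorm_smul hi₀.le]
        exact circNorm_add_le _ _
    _ ≤ C * circNorm w + c * (C * circNorm b) := by
        gcongr
        · exact ih _ hsupp (fun i => le_max_right _ _) rfl
        · exact h b fun i => by by_cases hi : 0 < u i <;> simp [b, hi]
    _ = C * circNorm u := by
        rw [circNorm_eq_max_sub_add_smul_of_le hu hi₀.le hmin]
        ring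

theorem circNorm_matrix_bound_of_zeroOne {n : ℕ} (A : Matrix (Fin n) (Fin n) ℝ)
    (C : ℝ) (hC : 0 ≤ C)
    (h : ∀ v : Fin n → ℝ, (∀ i, v i = 0 ∨ v i = 1) →
      circNorm (A.mulVec v) ≤ C * circNorm v) :
    ∀ u : Fin n → ℝ, circNorm (A.mulVec u) ≤ 16 * C * circNorm u := by
  intro u
  have hpos : circNorm u⁺ ≤ circNorm u :=
    circNorm_mono fun i => (abs_of_nonneg (posPart_nonneg (u i))).trans_le
      (max_le (le_abs_self _) (abs_nonneg _))
  have hneg : circNorm u⁻ ≤ circNorm u :=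
    circNorm_mono fun i => (abs_of_nonneg (negPart_nonneg (u i))).trans_le
      (max_le (neg_le_abs _) (abs_nonneg _))
  calc circNorm (A *ᵥ u) = circNorm (A *ᵥ u⁺ - A *ᵥ u⁻) := by
        rw [← mulVec_sub, posPart_sub_negPart]
    _ ≤ C * circNorm u⁺ + C * circNorm u⁻ :=
        (circNorm_sub_le _ _).trans (add_le_add
          (circNorm_mulVec_le_of_nonneg A h (posPart_nonneg u))
          (circNorm_mulVec_le_of_nonneg A h (negPart_nonneg u)))
    _ ≤ 2 * C * circNorm u := by nlinarith
    _ ≤ 16 * C * circNorm u := by nlinarith [circNorm_nonneg u]
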